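/- The one-point process of the randomized Chirikov map is exactly controllable: for K > 0 and any x, y ∈ 𝕋², if |y₁ − x₁| ≤ K (as representatives of torus distance in the first coordinate), then there exists ω = (ω¹, ω²) ∈ [0,2π)² such that f_ω(x) = y, where f_ω(x) = (x₁ + K sin(x₂ − ω¹), x₂ + x₁ + K sin(x₂ − ω¹) − ω²) mod 2π. In particular, if K ≥ π then exact controllability holds for all x, y ∈ 𝕋². -/
import Mathlib


open Real

/-- The torus `𝕋² = (ℝ/2πℤ)²`. -/
abbrev Torus2 : Type := AddCircle (2 * π) × AddCircle (2 * π)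

/-- `sin` descends to the circle `ℝ/2πℤ`. -/
noncomputable def circleSin : AddCircle (2 * π) → ℝ := Real.sin_periodic.lift

/-- The randomized Chirikov standard map on `𝕋²`:
`f_ω(x) = (x₁ + K sin(x₂ − ω¹), x₂ + x₁ + K sin(x₂ − ω¹) − ω²)` (mod 2π). -/
noncomputable def chirikov (K : ℝ) (ω : ℝ × ℝ) (x : Torus2) : Torus2 :=
  (x.1 + ↑(K * circleSin (x.2 - ↑ω.1)),
   x.2 + x.1 + ↑(K * circleSin (x.2 - ↑ω.1)) - ↑ω.2)


lemma coe_toIcoMod_eq' (hp : 0 < 2 * π) (c a : ℝ) :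
    ((toIcoMod hp c a : ℝ) : AddCircle (2 * π)) = (a : AddCircle (2 * π)) := by
  change QuotientAddGroup.mk _ = QuotientAddGroup.mk _
  rw [QuotientAddGroup.eq_iff_sub_mem]
  rw [toIcoMod_sub_self]
  exact AddSubgroup.zsmul_mem _ (AddSubgroup.mem_zmultiples _) _

/-- Exact controllability of the one-point Chirikov process: if the difference of the
first coordinates of `y` and `x` is represented by a real number of absolute value at
most `K`, then some phase `ω ∈ [0,2π)²` steers `x` to `y` in one step; in particular,
if `K ≥ π` this holds for all `x, y ∈ 𝕋²`. -/
theorem stmt_8 (K : ℝ) (hK : 0 < K) :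
    (∀ x y : Torus2, (∃ r : ℝ, |r| ≤ K ∧ y.1 = x.1 + ↑r) →
      ∃ ω : ℝ × ℝ, ω.1 ∈ Set.Ico 0 (2 * π) ∧ ω.2 ∈ Set.Ico 0 (2 * π) ∧
        chirikov K ω x = y) ∧
    (π ≤ K → ∀ x y : Torus2,
      ∃ ω : ℝ × ℝ, ω.1 ∈ Set.Ico 0 (2 * π) ∧ ω.2 ∈ Set.Ico 0 (2 * π) ∧
        chirikov K ω x = y) := by
  have hp : 0 < 2 * π := by positivity
  have main : ∀ x y : Torus2, (∃ r : ℝ, |r| ≤ K ∧ y.1 = x.1 + ↑r) →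
      ∃ ω : ℝ × ℝ, ω.1 ∈ Set.Ico 0 (2 * π) ∧ ω.2 ∈ Set.Ico 0 (2 * π) ∧
        chirikov K ω x = y := by
    rintro ⟨x1, x2⟩ ⟨y1, y2⟩ ⟨r, hr, hy1⟩
    obtain ⟨a, rfl⟩ := QuotientAddGroup.mk_surjective x1
    obtain ⟨b, rfl⟩ := QuotientAddGroup.mk_surjective x2
    obtain ⟨c, rfl⟩ := QuotientAddGroup.mk_surjective y2
    have habs := abs_le.1 hr
    have hs1 : -1 ≤ r / K := by
      rw [le_div_iff₀ hK]; linarith [habs.1]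
    have hs2 : r / K ≤ 1 := by
      rw [div_le_one hK]; exact habs.2
    set ω1 : ℝ := toIcoMod hp 0 (b - Real.arcsin (r / K)) with hω1
    set ω2 : ℝ := toIcoMod hp 0 (b + a + r - c) with hω2
    refine ⟨(ω1, ω2), by simpa [hω1] using toIcoMod_mem_Ico hp 0 _,
      by simpa [hω2] using toIcoMod_mem_Ico hp 0 _, ?_⟩
    have hco1 : ((ω1 : ℝ) : AddCircle (2 * π)) = ((b - Real.arcsin (r / K) : ℝ) : AddCircle (2 * π)) :=
      coe_toIcoMod_eq' hp 0 _
    have hco2 : ((ω2 : ℝ) : AddCircle (2 * π)) = ((b + a + r - c : ℝ) : AddCircle (2 * π)) :=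
      coe_toIcoMod_eq' hp 0 _
    have hsin : circleSin ((b : AddCircle (2 * π)) - (ω1 : AddCircle (2 * π))) = r / K := by
      rw [hco1]
      have : (b : AddCircle (2 * π)) - ((b - Real.arcsin (r / K) : ℝ) : AddCircle (2 * π))
          = ((Real.arcsin (r / K) : ℝ) : AddCircle (2 * π)) := by
        rw [← QuotientAddGroup.mk_sub]; ring_nf
      rw [this]
      show Real.sin_periodic.lift _ = _
      rw [Function.Periodic.lift_coe]
      exact Real.sin_arcsin hs1 hs2
    have hKs : K * circleSin ((b : AddCircle (2 * π)) - (ω1 : AddCircle (2 * π))) = r := by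
      rw [hsin]; field_simp
    simp only [chirikov]
    refine Prod.ext ?_ ?_
    · show (a : AddCircle (2 * π)) + _ = y1
      rw [hKs]; exact hy1.symm
    · show (b : AddCircle (2 * π)) + a + _ - _ = (c : AddCircle (2*π))
      rw [hKs, hco2]
      ring_nf
      rw [← QuotientAddGroup.mk_add, ← QuotientAddGroup.mk_add, ← QuotientAddGroup.mk_sub]
      ring_nf
  refine ⟨main, fun hπK x y => ?_⟩
  obtain ⟨e, he⟩ := QuotientAddGroup.mk_surjective (y.1 - x.1)
  refine main x y ⟨toIcoMod hp (-π) e, ?_, ?_⟩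
  · have hm := toIcoMod_mem_Ico hp (-π) e
    have h1 : -π ≤ toIcoMod hp (-π) e := hm.1
    have h2 : toIcoMod hp (-π) e < -π + 2 * π := hm.2
    rw [abs_le]
    constructor
    · linarith
    · linarith
  · have : ((toIcoMod hp (-π) e : ℝ) : AddCircle (2 * π)) = (e : AddCircle (2 * π)) :=
      coe_toIcoMod_eq' hp _ _
    rw [this, he]
    abel
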